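/- arXiv:2104.13006 — 2 statements merged into one kernel-verified Lean document; each statement's English description precedes it below -/
import Mathlib

section
/- For every α ∈ [0,∞], the level set {x ∈ (0,1) : λ(x) = α} is uncountable. -/
open Filter MeasureTheory Set
open scoped ENNReal NNReal

/-- The Engel series map `T(x) = x⌈1/x⌉ - 1`, with `T(0) = 0`. -/
noncomputable def engelT (x : ℝ) : ℝ := if x = 0 then 0 else x * (⌈x⁻¹⌉ : ℝ) - 1

/-- The `n`-th Engel digit `d_n(x) = ⌈1/(T^{n-1} x)⌉` (for `n ≥ 1`);
it equals `0` when the Engel expansion of `x` has terminated. -/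
noncomputable def engelDigit (n : ℕ) (x : ℝ) : ℕ := ⌈(engelT^[n - 1] x)⁻¹⌉₊

/-- The exponent of convergence `λ(x) = inf {s ≥ 0 : Σ_{n≥1} d_n(x)^{-s} < ∞}`,
 valued in `[0,∞]` (with `inf ∅ = ∞`). -/
noncomputable def engelLambda (x : ℝ) : ℝ≥0∞ :=
  sInf (ENNReal.ofReal ''
    {s : ℝ | 0 ≤ s ∧ Summable fun n : ℕ => ((engelDigit (n + 1) x : ℝ)) ^ (-s)})

/-- `D(x) = liminf_n (log d_n(x))/(log n)`, valued in `[0,∞]`. -/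
noncomputable def engelDexp (x : ℝ) : ℝ≥0∞ :=
  Filter.liminf (fun n : ℕ =>
    ENNReal.ofReal (Real.log (engelDigit n x) / Real.log n)) Filter.atTop

/-!
Every nondecreasing sequence `b` of integers `≥ 2` that is not eventually constant is the
digit sequence of `Σₙ 1 / (b₀ ⋯ bₙ)`: the Engel map acts on this sum as the shift of `b`.
Given `α`, pick `f` whose exponent of convergence is `α` (`(n + 1) ^ (1 / α)`, `2 ^ n`, or
`1 + log (n + 1)`) and, for `ω ∈ {0,1}^ℕ`, the digits `2 ⌈f n⌉ + ω_k` on the `k`-th plateau of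
`⌈f⌉`. These are monotone, comparable to `f` up to constant factors (so `λ = α`), and distinct
`ω` give distinct digits, hence distinct points of the level set.
-/

open Asymptotics

noncomputable def convergenceExponent (c : ℕ → ℝ) : ℝ≥0∞ :=
  sInf (ENNReal.ofReal '' {s : ℝ | 0 ≤ s ∧ Summable fun n => c n ^ (-s)})

section ConvergenceExponent

variable {c d : ℕ → ℝ}

lemma convergenceExponent_le_of_isBigO (hc : ∀ n, 0 ≤ c n) (hd : ∀ n, 0 < d n)
    (h : d =O[atTop] c) : convergenceExponent c ≤ convergenceExponent d := by
  refine sInf_le_sInf (image_mono fun s ⟨hs, hsum⟩ => ⟨hs, summable_of_isBigO_nat hsum ?_⟩)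
  have hpow : (fun n => d n ^ s) =O[atTop] fun n => c n ^ s :=
    h.rpow hs (Eventually.of_forall hc)
  simpa only [Real.rpow_neg (hc _), Real.rpow_neg (hd _).le] using
    hpow.inv_rev (Eventually.of_forall fun n h0 => absurd h0 (Real.rpow_pos_of_pos (hd n) s).ne')

lemma convergenceExponent_congr (hc : ∀ n, 0 < c n) (hd : ∀ n, 0 < d n) (h : c =Θ[atTop] d) :
    convergenceExponent c = convergenceExponent d :=
  le_antisymm (convergenceExponent_le_of_isBigO (fun n => (hc n).le) hd h.2)
    (convergenceExponent_le_of_isBigO (fun n => (hd n).le) hc h.1)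

lemma convergenceExponent_eq_ofReal {t : ℝ} (ht : 0 ≤ t)
    (hsum : ∀ s, t < s → Summable fun n => c n ^ (-s))
    (hnot : ∀ s, 0 ≤ s → s < t → ¬ Summable fun n => c n ^ (-s)) :
    convergenceExponent c = ENNReal.ofReal t := by
  refine le_antisymm (ENNReal.le_of_forall_pos_le_add fun ε hε _ => ?_) (le_sInf ?_)
  · have hε' : t < t + ε := by simpa using hε
    calc convergenceExponent c ≤ ENNReal.ofReal (t + ε) :=
          sInf_le ⟨t + ε, ⟨ht.trans hε'.le, hsum _ hε'⟩, rfl⟩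
      _ = ENNReal.ofReal t + ε := by
          rw [ENNReal.ofReal_add ht ε.coe_nonneg, ENNReal.ofReal_coe_nnreal]
  · rintro _ ⟨s, ⟨hs, hsum'⟩, rfl⟩
    exact ENNReal.ofReal_le_ofReal (not_lt.1 fun hlt => hnot s hs hlt hsum')

lemma convergenceExponent_add_one_rpow {t : ℝ} (ht : 0 < t) :
    convergenceExponent (fun n => ((n : ℝ) + 1) ^ t⁻¹) = ENNReal.ofReal t := by
  have key : ∀ s, (fun n : ℕ => (((n : ℝ) + 1) ^ t⁻¹) ^ (-s)) =
      fun n : ℕ => 1 / |(n : ℝ) + 1| ^ (s / t) := fun s => funext fun n => by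
    have hn : (0 : ℝ) < n + 1 := by positivity
    rw [abs_of_pos hn, ← Real.rpow_mul hn.le, one_div, ← Real.rpow_neg hn.le]
    ring_nf
  refine convergenceExponent_eq_ofReal ht.le (fun s hs => ?_) fun s _ hs => ?_
  · rw [key, Real.summable_one_div_nat_add_rpow]
    exact (one_lt_div ht).2 hs
  · rw [key, Real.summable_one_div_nat_add_rpow]
    exact fun h => hs.not_gt ((one_lt_div ht).1 h)

lemma convergenceExponent_two_pow : convergenceExponent (fun n => 2 ^ n) = 0 := by
  rw [← ENNReal.ofReal_zero]
  refine convergenceExponent_eq_ofReal le_rfl (fun s hs => ?_) fun s hs hs' =>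
    (hs.not_gt hs').elim
  simp_rw [← Real.rpow_pow_comm zero_le_two]
  exact summable_geometric_of_lt_one (by positivity)
    (Real.rpow_lt_one_of_one_lt_of_neg one_lt_two (neg_neg_of_pos hs))

lemma convergenceExponent_one_add_log :
    convergenceExponent (fun n => 1 + Real.log ((n : ℝ) + 1)) = ⊤ := by
  refine ENNReal.eq_top_of_forall_nnreal_le fun r => ?_
  rcases eq_or_lt_of_le r.2 with hr | hr
  · simp [NNReal.coe_eq_zero.1 hr.symm]
  have hlog :
      (fun n : ℕ => Real.log ((n : ℝ) + 1)) =O[atTop] fun n => ((n : ℝ) + 1) ^ (r : ℝ)⁻¹ :=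
    ((isLittleO_log_rpow_atTop (inv_pos.2 hr)).isBigO).comp_tendsto
      (tendsto_atTop_add_const_right _ 1 tendsto_natCast_atTop_atTop)
  have hone : (fun _ : ℕ => (1 : ℝ)) =O[atTop] fun n => ((n : ℝ) + 1) ^ (r : ℝ)⁻¹ :=
    isBigO_of_le _ fun n => by
      rw [norm_one, Real.norm_of_nonneg (by positivity)]
      exact Real.one_le_rpow (by linarith [n.cast_nonneg (α := ℝ)]) (by positivity)
  calc (r : ℝ≥0∞) = ENNReal.ofReal r := by simp
    _ = convergenceExponent (fun n => ((n : ℝ) + 1) ^ (r : ℝ)⁻¹) :=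
        (convergenceExponent_add_one_rpow hr).symm
    _ ≤ _ := convergenceExponent_le_of_isBigO (fun n => by positivity)
        (fun n => add_pos_of_pos_of_nonneg one_pos (Real.log_nonneg (by simp))) (hone.add hlog)

end ConvergenceExponent

noncomputable def engelSeries (b : ℕ → ℕ) : ℝ :=
  ∑' n, (∏ i ∈ Finset.range (n + 1), (b i : ℝ))⁻¹

lemma summable_inv_pow_succ {r : ℝ} (hr : 1 < r) : Summable fun n : ℕ => r⁻¹ ^ (n + 1) :=
  (summable_nat_add_iff 1).2
    (summable_geometric_of_lt_one (by positivity) (inv_lt_one_of_one_lt₀ hr))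

lemma tsum_inv_pow_succ {r : ℝ} (hr : 1 < r) : ∑' n : ℕ, r⁻¹ ^ (n + 1) = (r - 1)⁻¹ := by
  simp_rw [pow_succ', tsum_mul_left,
    tsum_geometric_of_lt_one (by positivity) (inv_lt_one_of_one_lt₀ hr)]
  field_simp [(sub_pos.2 hr).ne']

/-- Eventually constant sequences are excluded: constant digits `c` sum to `1 / (c - 1)`, whose
Engel expansion is the single digit `c - 1`. -/
structure IsEngelDigitSeq (b : ℕ → ℕ) : Prop where
  two_le : ∀ n, 2 ≤ b n
  monotone : Monotone b
  tendsto_atTop : Tendsto b atTop atTop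

namespace IsEngelDigitSeq

variable {b : ℕ → ℕ} (hb : IsEngelDigitSeq b)
include hb

lemma comp_add (k : ℕ) : IsEngelDigitSeq (fun n => b (n + k)) :=
  ⟨fun _ => hb.two_le _, hb.monotone.comp fun _ _ h => Nat.add_le_add_right h k,
    (tendsto_add_atTop_iff_nat k).2 hb.tendsto_atTop⟩

lemma one_lt (n : ℕ) : (1 : ℝ) < b n := by exact_mod_cast hb.two_le n

lemma prod_pos (n : ℕ) : 0 < ∏ i ∈ Finset.range n, (b i : ℝ) :=
  Finset.prod_pos fun i _ => one_pos.trans (hb.one_lt i)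

lemma pow_le_prod (n : ℕ) : (b 0 : ℝ) ^ (n + 1) ≤ ∏ i ∈ Finset.range (n + 1), (b i : ℝ) := by
  simpa using Finset.prod_le_prod (s := Finset.range (n + 1)) (f := fun _ => (b 0 : ℝ))
    (fun _ _ => Nat.cast_nonneg _) fun i _ => by exact_mod_cast hb.monotone (Nat.zero_le i)

lemma inv_prod_range_le (n : ℕ) :
    (∏ i ∈ Finset.range (n + 1), (b i : ℝ))⁻¹ ≤ ((b 0 : ℝ)⁻¹) ^ (n + 1) := by
  rw [inv_pow]
  exact inv_anti₀ (by have := hb.one_lt 0; positivity) (hb.pow_le_prod n)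

lemma summable_inv_prod_range : Summable fun n => (∏ i ∈ Finset.range (n + 1), (b i : ℝ))⁻¹ :=
  (summable_inv_pow_succ (hb.one_lt 0)).of_nonneg_of_le (fun _ => (inv_pos.2 (hb.prod_pos _)).le)
    hb.inv_prod_range_le

lemma engelSeries_eq :
    engelSeries b = (b 0 : ℝ)⁻¹ * (1 + engelSeries (fun n => b (n + 1))) := by
  rw [engelSeries, hb.summable_inv_prod_range.tsum_eq_zero_add, engelSeries, mul_add,
    ← tsum_mul_left]
  congr 1
  · simp
  · refine tsum_congr fun n => ?_
    rw [Finset.prod_range_succ' _ (n + 1), mul_inv, mul_comm]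

lemma engelSeries_pos : 0 < engelSeries b :=
  hb.summable_inv_prod_range.tsum_pos (fun _ => (inv_pos.2 (hb.prod_pos _)).le) 0
    (inv_pos.2 (hb.prod_pos _))

lemma engelSeries_lt : engelSeries b < ((b 0 : ℝ) - 1)⁻¹ := by
  obtain ⟨j, hj⟩ := (hb.tendsto_atTop.eventually_gt_atTop (b 0)).exists
  rw [← tsum_inv_pow_succ (hb.one_lt 0)]
  refine hb.summable_inv_prod_range.tsum_lt_tsum hb.inv_prod_range_le (i := j) ?_
    (summable_inv_pow_succ (hb.one_lt 0))
  rw [inv_pow]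
  refine inv_strictAnti₀ (by have := hb.one_lt 0; positivity) ?_
  simpa using Finset.prod_lt_prod (s := Finset.range (j + 1)) (f := fun _ => (b 0 : ℝ))
    (fun _ _ => one_pos.trans (hb.one_lt 0))
    (fun i _ => by exact_mod_cast hb.monotone (Nat.zero_le i))
    ⟨j, Finset.self_mem_range_succ j, by exact_mod_cast hj⟩

lemma ceil_inv_engelSeries : ⌈(engelSeries b)⁻¹⌉ = b 0 := by
  have hpos := hb.engelSeries_pos
  have hlow : (b 0 : ℝ) - 1 < (engelSeries b)⁻¹ := by
    simpa using inv_strictAnti₀ hpos hb.engelSeries_lt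
  have hupp : (engelSeries b)⁻¹ ≤ b 0 := by
    rw [hb.engelSeries_eq, mul_inv, inv_inv]
    have := (hb.comp_add 1).engelSeries_pos
    exact mul_le_of_le_one_right (by positivity) (inv_le_one_of_one_le₀ (by linarith))
  rw [Int.ceil_eq_iff]
  push_cast
  exact ⟨by linarith, hupp⟩

lemma engelT_engelSeries : engelT (engelSeries b) = engelSeries (fun n => b (n + 1)) := by
  have h0 : (b 0 : ℝ) ≠ 0 := (one_pos.trans (hb.one_lt 0)).ne'
  rw [engelT, if_neg hb.engelSeries_pos.ne', hb.ceil_inv_engelSeries, hb.engelSeries_eq]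
  push_cast
  field_simp
  ring

lemma iterate_engelT_engelSeries (k : ℕ) :
    engelT^[k] (engelSeries b) = engelSeries (fun n => b (n + k)) := by
  induction k with
  | zero => rfl
  | succ k ih =>
    rw [Function.iterate_succ_apply', ih, (hb.comp_add k).engelT_engelSeries]
    simp only [add_assoc, add_comm 1 k]

lemma engelDigit_engelSeries (n : ℕ) : engelDigit (n + 1) (engelSeries b) = b n := by
  have h := (hb.comp_add n).ceil_inv_engelSeries
  rw [zero_add, ← Int.natCast_ceil_eq_ceil (inv_pos.2 (hb.comp_add n).engelSeries_pos).le,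
    Nat.cast_inj] at h
  rw [engelDigit, Nat.add_sub_cancel, hb.iterate_engelT_engelSeries, h]

lemma engelSeries_mem_Ioo : engelSeries b ∈ Ioo 0 1 :=
  ⟨hb.engelSeries_pos, hb.engelSeries_lt.trans_le
    (inv_le_one_of_one_le₀ (le_sub_iff_add_le.2 (by exact_mod_cast hb.two_le 0)))⟩

lemma engelLambda_engelSeries :
    engelLambda (engelSeries b) = convergenceExponent (fun n => b n) := by
  simp only [engelLambda, convergenceExponent, hb.engelDigit_engelSeries]

lemma eq_of_engelSeries_eq {b' : ℕ → ℕ} (hb' : IsEngelDigitSeq b')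
    (h : engelSeries b = engelSeries b') : b = b' :=
  funext fun n => by rw [← hb.engelDigit_engelSeries, h, hb'.engelDigit_engelSeries]

end IsEngelDigitSeq

lemma not_countable_nat_to_bool : ¬ Countable (ℕ → Bool) := fun _ =>
  let ⟨f, hf⟩ := exists_surjective_nat (ℕ → Bool)
  let ⟨m, hm⟩ := hf fun n => !f n n
  by simpa using congrFun hm m

lemma infinite_setOf_ne_succ {a : ℕ → ℕ} (ha : Tendsto a atTop atTop) :
    {m | a m ≠ a (m + 1)}.Infinite := by
  refine Nat.frequently_atTop_iff_infinite.1 fun hconst => ?_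
  obtain ⟨N, hN⟩ := eventually_atTop.1 hconst
  have h : ∀ m ≥ N, a m = a N := fun m hm => by
    induction m, hm using Nat.le_induction with
    | base => rfl
    | succ m hm ih => rw [← ih]; exact (not_not.1 (hN m hm)).symm
  obtain ⟨m, hm, hmN⟩ := ((ha.eventually_gt_atTop (a N)).and (eventually_ge_atTop N)).exists
  exact hm.ne' (h m hmN)

/-- The `k`-th bit of `ω` is added on the `k`-th plateau of `a`, so that the sequence stays
monotone and `ω` can be read off from it. -/
def engelFamily (a : ℕ → ℕ) (ω : ℕ → Bool) (n : ℕ) : ℕ :=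
  2 * a n + (ω (Nat.count (fun m => a m ≠ a (m + 1)) n)).toNat

section EngelFamily

variable {a : ℕ → ℕ}

lemma engelFamily_mem_Icc (ω : ℕ → Bool) (n : ℕ) :
    engelFamily a ω n ∈ Icc (2 * a n) (2 * a n + 1) :=
  ⟨Nat.le_add_right _ _, Nat.add_le_add_left (Bool.toNat_le _) _⟩

lemma monotone_engelFamily (ha : Monotone a) (ω : ℕ → Bool) : Monotone (engelFamily a ω) := by
  refine monotone_nat_of_le_succ fun n => ?_
  rcases eq_or_lt_of_le (ha (Nat.le_add_right n 1)) with h | h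
  · simp [engelFamily, Nat.count_succ, h]
  · have := (engelFamily_mem_Icc (a := a) ω n).2
    have := (engelFamily_mem_Icc (a := a) ω (n + 1)).1
    omega

lemma isEngelDigitSeq_engelFamily (ha1 : ∀ n, 1 ≤ a n) (ha : Monotone a)
    (hat : Tendsto a atTop atTop) (ω : ℕ → Bool) : IsEngelDigitSeq (engelFamily a ω) :=
  ⟨fun n => (Nat.mul_le_mul_left 2 (ha1 n)).trans (engelFamily_mem_Icc ω n).1,
    monotone_engelFamily ha ω,
    tendsto_atTop_mono (fun n => (Nat.le_mul_of_pos_left _ two_pos).trans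
      (engelFamily_mem_Icc ω n).1) hat⟩

lemma engelFamily_injective (hat : Tendsto a atTop atTop) :
    Function.Injective (engelFamily a) := by
  intro ω ω' h
  funext k
  have hk := congrFun h (Nat.nth (fun m => a m ≠ a (m + 1)) k)
  simp only [engelFamily, Nat.count_nth_of_infinite (infinite_setOf_ne_succ hat)] at hk
  revert hk
  cases ω k <;> cases ω' k <;> simp

lemma engelFamily_ceil_isTheta {f : ℕ → ℝ} (hf : ∀ n, 1 ≤ f n) (ω : ℕ → Bool) :
    (fun n => (engelFamily (fun n => ⌈f n⌉₊) ω n : ℝ)) =Θ[atTop] f := by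
  set b := engelFamily (fun n => ⌈f n⌉₊) ω
  have hbounds (n : ℕ) : f n ≤ b n ∧ (b n : ℝ) ≤ 5 * f n := by
    obtain ⟨hlow, hupp⟩ := engelFamily_mem_Icc (a := fun n => ⌈f n⌉₊) ω n
    have hlow' : (2 * ⌈f n⌉₊ : ℝ) ≤ b n := by exact_mod_cast hlow
    have hupp' : (b n : ℝ) ≤ 2 * ⌈f n⌉₊ + 1 := by exact_mod_cast hupp
    have := Nat.le_ceil (f n)
    have := Nat.ceil_lt_add_one (zero_le_one.trans (hf n))
    constructor <;> linarith [hf n]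
  have hnorm (n : ℕ) : ‖(b n : ℝ)‖ = b n ∧ ‖f n‖ = f n :=
    ⟨Real.norm_natCast _, Real.norm_of_nonneg (zero_le_one.trans (hf n))⟩
  exact ⟨isBigO_of_le' (c := 5) _ fun n => by simpa only [hnorm] using (hbounds n).2,
    isBigO_of_le _ fun n => by simpa only [hnorm] using (hbounds n).1⟩

end EngelFamily

theorem not_countable_engelLambda_eq_convergenceExponent {f : ℕ → ℝ} (hf : ∀ n, 1 ≤ f n)
    (hmono : Monotone f) (htop : Tendsto f atTop atTop) :
    ¬ Set.Countable {x : ℝ | x ∈ Ioo 0 1 ∧ engelLambda x = convergenceExponent f} := by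
  set a : ℕ → ℕ := fun n => ⌈f n⌉₊
  have hat : Tendsto a atTop atTop := tendsto_nat_ceil_atTop.comp htop
  have hb := isEngelDigitSeq_engelFamily
    (fun n => Nat.one_le_ceil_iff.2 (one_pos.trans_le (hf n)))
    (fun _ _ h => Nat.ceil_mono (hmono h)) hat
  have hmaps (ω : ℕ → Bool) : engelSeries (engelFamily a ω) ∈
      {x : ℝ | x ∈ Ioo 0 1 ∧ engelLambda x = convergenceExponent f} := by
    refine ⟨(hb ω).engelSeries_mem_Ioo, ?_⟩
    rw [(hb ω).engelLambda_engelSeries]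
    exact convergenceExponent_congr (fun n => by have := (hb ω).two_le n; positivity)
      (fun n => one_pos.trans_le (hf n)) (engelFamily_ceil_isTheta hf ω)
  have hinj : Function.Injective fun ω => engelSeries (engelFamily a ω) := fun ω ω' h =>
    engelFamily_injective hat ((hb ω).eq_of_engelSeries_eq (hb ω') h)
  exact fun hcount => not_countable_nat_to_bool
    (@Function.Injective.countable _ _ hcount.to_subtype _ (hinj.codRestrict hmaps))

/-- For every `α ∈ [0,∞]`, the level set `{x ∈ (0,1) : λ(x) = α}` is
uncountable. -/
theorem engelLambda_level_set_uncountable (α : ℝ≥0∞) :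
    ¬ Set.Countable {x : ℝ | x ∈ Set.Ioo (0 : ℝ) 1 ∧ engelLambda x = α} := by
  have hshift : Tendsto (fun n : ℕ => (n : ℝ) + 1) atTop atTop :=
    tendsto_atTop_add_const_right _ 1 tendsto_natCast_atTop_atTop
  rcases eq_or_ne α ⊤ with rfl | hα
  · rw [← convergenceExponent_one_add_log]
    exact not_countable_engelLambda_eq_convergenceExponent
      (fun n => le_add_of_nonneg_right (Real.log_nonneg (by simp)))
      (fun m n h => add_le_add_right (Real.log_le_log (by positivity) (by simpa using h)) 1)
      (tendsto_atTop_add_const_left _ 1 (Real.tendsto_log_atTop.comp hshift))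
  rcases eq_or_ne α 0 with rfl | h0
  · rw [← convergenceExponent_two_pow]
    exact not_countable_engelLambda_eq_convergenceExponent (fun n => one_le_pow₀ one_le_two)
      (pow_right_mono₀ one_le_two) (tendsto_pow_atTop_atTop_of_one_lt one_lt_two)
  have ht : 0 < α.toReal := ENNReal.toReal_pos h0 hα
  rw [← ENNReal.ofReal_toReal hα, ← convergenceExponent_add_one_rpow ht]
  exact not_countable_engelLambda_eq_convergenceExponent
    (fun n => Real.one_le_rpow (by simp) (inv_pos.2 ht).le)
    (fun m n h => Real.rpow_le_rpow (by positivity) (by simpa using h) (inv_pos.2 ht).le)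
    ((tendsto_rpow_atTop (inv_pos.2 ht)).comp hshift)
end

section
/- The set {x ∈ (0,1) : λ(x) = ∞} is residual (comeagre) in (0,1). -/
open Filter MeasureTheory Set
open scoped ENNReal NNReal

/-!
If the first `N` Engel digits of `x` lie in `[1, D]` and `N ≥ m D^k`, the partial sums of
`Σ d_n(x)^{-s}`, `s ≤ k`, reach `m`. Such points fill a nonempty open subinterval of every open
interval `I ⊆ (0,1)`. Indeed, the branches `x ↦ e x - 1` (`e ≥ 2`) of `T` are expanding, so some
iterate `T^j` stretches a subinterval of `I` over `(0, ε)`; for `D > 1 + 1/ε`, pulling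
`(1/D, 1/(D-1))` back `M` times along the branch `x ↦ D x - 1` gives an interval in `(0, ε)` whose
`M`-th image lies in that branch; and as Engel digits are nondecreasing, a digit `D` bounds all
earlier ones. A countable intersection of dense open sets is residual.
-/

open Function

def HasLongBoundedPrefix (d : ℕ → ℕ) (k m : ℕ) : Prop :=
  ∃ N D : ℕ, 0 < D ∧ m * D ^ k ≤ N ∧ ∀ n < N, d n ∈ Icc 1 D

lemma natCast_le_sum_rpow_neg {d : ℕ → ℕ} {N D k m : ℕ} {s : ℝ} (hD : 0 < D)
    (hN : m * D ^ k ≤ N) (hd : ∀ n < N, d n ∈ Icc 1 D) (hs : 0 ≤ s) (hsk : s ≤ k) :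
    (m : ℝ) ≤ ∑ n ∈ Finset.range N, (d n : ℝ) ^ (-s) := by
  have hD1 : (1 : ℝ) ≤ D := Nat.one_le_cast.2 hD
  have hterm : ∀ n ∈ Finset.range N, (D : ℝ) ^ (-s) ≤ (d n : ℝ) ^ (-s) := fun n hn => by
    obtain ⟨h1, h2⟩ := hd n (Finset.mem_range.1 hn)
    exact Real.rpow_le_rpow_of_nonpos (by exact_mod_cast h1) (by exact_mod_cast h2) (by linarith)
  calc (m : ℝ) ≤ N * ((D : ℝ) ^ k)⁻¹ := by
        rw [le_mul_inv_iff₀ (by positivity)]; exact_mod_cast hN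
    _ = N * (D : ℝ) ^ (-(k : ℝ)) := by rw [Real.rpow_neg (by positivity), Real.rpow_natCast]
    _ ≤ N * (D : ℝ) ^ (-s) := by gcongr
    _ ≤ ∑ n ∈ Finset.range N, (d n : ℝ) ^ (-s) := by
        simpa using Finset.card_nsmul_le_sum _ _ _ hterm

lemma not_summable_rpow_neg_of_forall_hasLongBoundedPrefix {d : ℕ → ℕ}
    (h : ∀ k m, HasLongBoundedPrefix d k m) {s : ℝ} (hs : 0 ≤ s) :
    ¬Summable fun n => (d n : ℝ) ^ (-s) := by
  intro hsum
  obtain ⟨N, D, hD, hN, hd⟩ := h ⌈s⌉₊ (⌊∑' n, (d n : ℝ) ^ (-s)⌋₊ + 1)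
  have hlower := natCast_le_sum_rpow_neg hD hN hd hs (Nat.le_ceil s)
  have hupper := hsum.sum_le_tsum (Finset.range N) fun n _ => Real.rpow_nonneg (Nat.cast_nonneg _) _
  push_cast at hlower
  linarith [Nat.lt_floor_add_one (∑' n, (d n : ℝ) ^ (-s))]

lemma engelLambda_eq_top_of_not_summable {x : ℝ}
    (h : ∀ s : ℝ, 0 ≤ s → ¬Summable fun n : ℕ => (engelDigit (n + 1) x : ℝ) ^ (-s)) :
    engelLambda x = ⊤ := by
  rw [engelLambda, sInf_eq_top]
  rintro _ ⟨s, ⟨hs, hsum⟩, rfl⟩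
  exact absurd hsum (h s hs)

lemma engelT_nonneg {x : ℝ} (hx : 0 ≤ x) : 0 ≤ engelT x := by
  rcases hx.eq_or_lt with rfl | hx
  · simp [engelT]
  rw [engelT, if_neg hx.ne']
  have := Int.le_ceil x⁻¹
  have := mul_inv_cancel₀ hx.ne'
  nlinarith

lemma engelT_le_self {x : ℝ} (hx : 0 ≤ x) : engelT x ≤ x := by
  rcases hx.eq_or_lt with rfl | hx
  · simp [engelT]
  rw [engelT, if_neg hx.ne']
  have := Int.ceil_lt_add_one x⁻¹
  have := mul_inv_cancel₀ hx.ne'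
  nlinarith

lemma iterate_engelT_nonneg {x : ℝ} (hx : 0 ≤ x) (n : ℕ) : 0 ≤ engelT^[n] x := by
  induction n with
  | zero => exact hx
  | succ n ih => rw [iterate_succ_apply']; exact engelT_nonneg ih

lemma antitone_iterate_engelT {x : ℝ} (hx : 0 ≤ x) : Antitone fun n => engelT^[n] x :=
  antitone_nat_of_succ_le fun n => by
    rw [iterate_succ_apply']; exact engelT_le_self (iterate_engelT_nonneg hx n)

/-- The open interval `(1/d, 1/(d-1))`, on which `T` is the affine branch `x ↦ d x - 1`. -/
def engelBranch (d : ℕ) : Set ℝ := {x | 1 < d * x ∧ (d - 1) * x < 1}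

section engelBranch

variable {d : ℕ} {x : ℝ}

lemma pos_of_mem_engelBranch (hx : x ∈ engelBranch d) : 0 < x :=
  pos_of_mul_pos_right (one_pos.trans hx.1) d.cast_nonneg

lemma ceil_inv_of_mem_engelBranch (hx : x ∈ engelBranch d) : ⌈x⁻¹⌉ = d := by
  have hx0 := pos_of_mem_engelBranch hx
  rw [Int.ceil_eq_iff, ← one_div, lt_div_iff₀ hx0, div_le_iff₀ hx0]
  push_cast
  constructor <;> linarith [hx.1, hx.2]

lemma natCeil_inv_of_mem_engelBranch (hx : x ∈ engelBranch d) : ⌈x⁻¹⌉₊ = d := by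
  rw [← Int.ceil_toNat, ceil_inv_of_mem_engelBranch hx, Int.toNat_natCast]

lemma engelT_of_mem_engelBranch (hx : x ∈ engelBranch d) : engelT x = d * x - 1 := by
  rw [engelT, if_neg (pos_of_mem_engelBranch hx).ne', ceil_inv_of_mem_engelBranch hx]
  push_cast
  ring

variable {p q : ℝ}

lemma Ioo_subset_engelBranch (hd : 2 ≤ d) (hp : 0 ≤ p) (hq : (d - 1) * q ≤ 1) :
    Ioo ((p + 1) / d) ((q + 1) / d) ⊆ engelBranch d := by
  have hd' : (2 : ℝ) ≤ d := by exact_mod_cast hd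
  intro x ⟨hpx, hxq⟩
  rw [div_lt_iff₀ (by positivity)] at hpx
  rw [lt_div_iff₀ (by positivity)] at hxq
  constructor
  · linarith
  · nlinarith [mul_lt_mul_of_pos_left hxq (by linarith : (0 : ℝ) < d - 1)]

lemma mapsTo_engelT_Ioo (hd : 2 ≤ d) (hp : 0 ≤ p) (hq : (d - 1) * q ≤ 1) :
    MapsTo engelT (Ioo ((p + 1) / d) ((q + 1) / d)) (Ioo p q) := by
  have hd0 : (0 : ℝ) < d := by positivity
  intro x hx
  rw [engelT_of_mem_engelBranch (Ioo_subset_engelBranch hd hp hq hx)]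
  obtain ⟨hpx, hxq⟩ := hx
  rw [div_lt_iff₀ hd0] at hpx
  rw [lt_div_iff₀ hd0] at hxq
  constructor <;> linarith

lemma exists_Ioo_mapsTo_engelBranch (hd : 2 ≤ d) (M : ℕ) :
    ∃ p q : ℝ, 0 ≤ p ∧ p < q ∧ (d - 1) * q ≤ 1 ∧ MapsTo engelT^[M] (Ioo p q) (engelBranch d) := by
  have hd' : (2 : ℝ) ≤ d := by exact_mod_cast hd
  have hd0 : (0 : ℝ) < d := by positivity
  have hd1 : (0 : ℝ) < d - 1 := by linarith
  induction M with
  | zero =>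
    refine ⟨1 / d, 1 / (d - 1), by positivity, by gcongr; linarith, by field_simp; rfl, ?_⟩
    intro x ⟨hpx, hxq⟩
    rw [iterate_zero_apply]
    rw [div_lt_iff₀ hd0] at hpx
    rw [lt_div_iff₀ hd1] at hxq
    exact ⟨by linarith, by linarith⟩
  | succ M ih =>
    obtain ⟨p, q, hp, hpq, hq, hmaps⟩ := ih
    refine ⟨(p + 1) / d, (q + 1) / d, by positivity, by gcongr, ?_, ?_⟩
    · rw [← mul_div_assoc, div_le_one hd0]; nlinarith
    · rw [iterate_succ]; exact hmaps.comp (mapsTo_engelT_Ioo hd hp hq)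

end engelBranch

lemma engelDigit_succ_mem_Icc {x : ℝ} {n N D : ℕ} (hx : 0 ≤ x)
    (hN : engelT^[N] x ∈ engelBranch D) (hn : n ≤ N) : engelDigit (n + 1) x ∈ Icc 1 D := by
  have hpos := pos_of_mem_engelBranch hN
  have hle : engelT^[N] x ≤ engelT^[n] x := antitone_iterate_engelT hx hn
  rw [engelDigit, Nat.add_sub_cancel]
  refine ⟨Nat.ceil_pos.2 (inv_pos.2 (hpos.trans_le hle)), ?_⟩
  rw [← natCeil_inv_of_mem_engelBranch hN]
  exact Nat.ceil_le_ceil (inv_anti₀ hpos hle)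

def EngelCovers (j : ℕ) (a b ε : ℝ) : Prop :=
  ∀ p q : ℝ, 0 ≤ p → p < q → q ≤ ε →
    ∃ lo hi, lo < hi ∧ Ioo lo hi ⊆ Ioo a b ∧ MapsTo engelT^[j] (Ioo lo hi) (Ioo p q)

lemma engelCovers_zero {a b : ℝ} (ha : a ≤ 0) : EngelCovers 0 a b b :=
  fun p q hp hpq hqb => ⟨p, q, hpq, Ioo_subset_Ioo (ha.trans hp) hqb, mapsTo_id _⟩

/-- Pulling back along the branch `x ↦ e x - 1` of `T`. -/
lemma EngelCovers.succ {j e : ℕ} {a b a' b' ε : ℝ} (h : EngelCovers j a' b' ε) (he : 2 ≤ e)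
    (ha' : 0 ≤ a') (hb' : (e - 1) * b' ≤ 1) (ha : a ≤ (a' + 1) / e) (hb : (b' + 1) / e ≤ b) :
    EngelCovers (j + 1) a b ε := by
  have he0 : (0 : ℝ) < e := by positivity
  have he1 : (0 : ℝ) ≤ e - 1 := by
    have : (2 : ℝ) ≤ e := by exact_mod_cast he
    linarith
  intro p q hp hpq hqε
  obtain ⟨lo, hi, hlohi, hsub, hmaps⟩ := h p q hp hpq hqε
  obtain ⟨hlo, hhi⟩ := (Ioo_subset_Ioo_iff hlohi).1 hsub
  refine ⟨(lo + 1) / e, (hi + 1) / e, by gcongr, Ioo_subset_Ioo ?_ ?_, ?_⟩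
  · exact ha.trans (by gcongr)
  · exact le_trans (by gcongr) hb
  · rw [iterate_succ]
    exact hmaps.comp (mapsTo_engelT_Ioo he (ha'.trans hlo) (le_trans (by gcongr) hb'))

lemma exists_two_le_one_lt_mul_sub_one_mul_le {b : ℝ} (hb0 : 0 < b) (hb : b ≤ 1) :
    ∃ e : ℕ, 2 ≤ e ∧ 1 < e * b ∧ (e - 1) * b ≤ 1 := by
  refine ⟨⌊b⁻¹⌋₊ + 1, ?_, ?_, ?_⟩
  · have : 1 ≤ ⌊b⁻¹⌋₊ := Nat.le_floor (by simpa using one_le_inv₀ hb0 |>.2 hb)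
    omega
  · push_cast
    rw [← div_lt_iff₀ hb0, one_div]
    exact Nat.lt_floor_add_one _
  · push_cast
    rw [add_sub_cancel_right, ← le_div_iff₀ hb0, one_div]
    exact Nat.floor_le (by positivity)

lemma exists_engelCovers_of_mul_lt_one {a b : ℝ} {e : ℕ} (he : 2 ≤ e) (hea : e * a < 1)
    (heb : 1 < e * b) (hbe : (e - 1) * b ≤ 1) : ∃ j ε, 0 < ε ∧ EngelCovers j a b ε := by
  have he0 : (0 : ℝ) < e := by positivity
  refine ⟨1, e * b - 1, by linarith, (engelCovers_zero le_rfl).succ he le_rfl ?_ ?_ ?_⟩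
  · nlinarith
  · rw [le_div_iff₀ he0]; linarith
  · rw [sub_add_cancel, mul_div_cancel_left₀ _ he0.ne']

/-- Unless `(a, b)` contains the left end `1/e` of a branch, `T` maps it affinely onto an interval
at least twice as long. -/
lemma exists_engelCovers_of_one_le_two_pow_mul (n : ℕ) {a b : ℝ} (ha : 0 ≤ a) (hab : a < b)
    (hb : b ≤ 1) (hn : 1 ≤ 2 ^ n * (b - a)) : ∃ j ε, 0 < ε ∧ EngelCovers j a b ε := by
  induction n generalizing a b with
  | zero =>
    obtain ⟨e, he, heb, hbe⟩ := exists_two_le_one_lt_mul_sub_one_mul_le (ha.trans_lt hab) hb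
    refine exists_engelCovers_of_mul_lt_one he ?_ heb hbe
    have : (0 : ℝ) ≤ e := e.cast_nonneg
    nlinarith
  | succ n ih =>
    obtain ⟨e, he, heb, hbe⟩ := exists_two_le_one_lt_mul_sub_one_mul_le (ha.trans_lt hab) hb
    have he0 : (0 : ℝ) < e := by positivity
    have he2 : (2 : ℝ) ≤ e := by exact_mod_cast he
    by_cases hea : e * a < 1
    · exact exists_engelCovers_of_mul_lt_one he hea heb hbe
    obtain ⟨j, ε, hε, hcov⟩ := ih (a := e * a - 1) (b := e * b - 1) (by linarith)
      (by nlinarith) (by nlinarith) (by rw [pow_succ] at hn; nlinarith)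
    refine ⟨j + 1, ε, hε, hcov.succ he (by linarith) (by nlinarith) ?_ ?_⟩ <;>
      rw [sub_add_cancel, mul_div_cancel_left₀ _ he0.ne']

lemma exists_engelCovers {a b : ℝ} (ha : 0 ≤ a) (hab : a < b) (hb : b ≤ 1) :
    ∃ j ε, 0 < ε ∧ EngelCovers j a b ε := by
  obtain ⟨n, hn⟩ := pow_unbounded_of_one_lt (b - a)⁻¹ one_lt_two
  rw [inv_lt_iff_one_lt_mul₀ (sub_pos.2 hab)] at hn
  exact exists_engelCovers_of_one_le_two_pow_mul n ha hab hb hn.le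

lemma exists_Ioo_iterate_mapsTo_engelBranch {a b : ℝ} (ha : 0 ≤ a) (hab : a < b) (hb : b ≤ 1) :
    ∃ D : ℕ, 2 ≤ D ∧ ∀ M : ℕ, ∃ N ≥ M, ∃ lo hi, lo < hi ∧ Ioo lo hi ⊆ Ioo a b ∧
      MapsTo engelT^[N] (Ioo lo hi) (engelBranch D) := by
  obtain ⟨j, ε, hε, hcov⟩ := exists_engelCovers ha hab hb
  obtain ⟨D, hεD⟩ := exists_nat_gt (ε⁻¹ + 1)
  have hDε : 1 < (D - 1) * ε := by
    rw [← div_lt_iff₀ hε, one_div]; linarith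
  have hD : 2 ≤ D := by
    have : (1 : ℝ) < D := by linarith [inv_pos.2 hε]
    exact_mod_cast this
  refine ⟨D, hD, fun M => ?_⟩
  obtain ⟨p, q, hp, hpq, hq, hmaps⟩ := exists_Ioo_mapsTo_engelBranch hD M
  obtain ⟨lo, hi, hlohi, hsub, hmaps'⟩ := hcov p q hp hpq (by nlinarith)
  refine ⟨M + j, le_self_add, lo, hi, hlohi, hsub, ?_⟩
  rw [iterate_add]
  exact hmaps.comp hmaps'

lemma dense_interior_of_forall_Ioo {s : Set ℝ} (hs : IsOpen s) {S : Set s}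
    (h : ∀ a b, a < b → Ioo a b ⊆ s →
      ∃ lo hi, lo < hi ∧ Ioo lo hi ⊆ Ioo a b ∧ ∀ x : s, (x : ℝ) ∈ Ioo lo hi → x ∈ S) :
    Dense (interior S) := by
  refine dense_iff_inter_open.2 fun U hU ⟨x, hx⟩ => ?_
  obtain ⟨V, hV, rfl⟩ := isOpen_induced_iff.1 hU
  obtain ⟨ε, hε, hball⟩ := Metric.isOpen_iff.1 (hV.inter hs) x ⟨hx, x.2⟩
  rw [Real.ball_eq_Ioo] at hball
  obtain ⟨lo, hi, hlohi, hsub, hS⟩ :=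
    h (x - ε) (x + ε) (by linarith) (hball.trans inter_subset_right)
  have hc : (lo + hi) / 2 ∈ Ioo lo hi := ⟨by linarith, by linarith⟩
  have hcV := hball (hsub hc)
  exact ⟨⟨_, hcV.2⟩, hcV.1, mem_interior.2 ⟨Subtype.val ⁻¹' Ioo lo hi, fun y hy => hS y hy,
    isOpen_Ioo.preimage continuous_subtype_val, hc⟩⟩

lemma dense_interior_hasLongBoundedPrefix (k m : ℕ) :
    Dense (interior
      {x : Ioo (0 : ℝ) 1 | HasLongBoundedPrefix (fun n => engelDigit (n + 1) x) k m}) := by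
  refine dense_interior_of_forall_Ioo isOpen_Ioo fun a b hab hsub => ?_
  obtain ⟨ha, hb⟩ := (Ioo_subset_Ioo_iff hab).1 hsub
  obtain ⟨D, hD, hcyl⟩ := exists_Ioo_iterate_mapsTo_engelBranch ha hab hb
  obtain ⟨N, hN, lo, hi, hlohi, hsub', hmaps⟩ := hcyl (m * D ^ k)
  exact ⟨lo, hi, hlohi, hsub', fun x hx => ⟨N + 1, D, by omega, by omega,
    fun n hn => engelDigit_succ_mem_Icc x.2.1.le (hmaps hx) (by omega)⟩⟩

/-- The set `{x ∈ (0,1) : λ(x) = ∞}` is residual (comeagre) in `(0,1)`. -/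
theorem engelLambda_eq_top_residual :
    {x : Set.Ioo (0 : ℝ) 1 | engelLambda (x : ℝ) = ⊤} ∈ residual (Set.Ioo (0 : ℝ) 1) := by
  have hres : (⋂ k : ℕ, ⋂ m : ℕ, interior
      {x : Ioo (0 : ℝ) 1 | HasLongBoundedPrefix (fun n => engelDigit (n + 1) x) k m}) ∈
      residual (Ioo (0 : ℝ) 1) :=
    countable_iInter_mem.2 fun k => countable_iInter_mem.2 fun m =>
      residual_of_dense_open isOpen_interior (dense_interior_hasLongBoundedPrefix k m)
  refine mem_of_superset hres fun x hx => engelLambda_eq_top_of_not_summable fun s hs => ?_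
  refine not_summable_rpow_neg_of_forall_hasLongBoundedPrefix (fun k m => ?_) hs
  exact (interior_subset (mem_iInter.1 (mem_iInter.1 hx k) m) :)
end
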